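/- arXiv:1012.3664 — 2 statements merged into one kernel-verified Lean document; each statement's English description precedes it below -/
import Mathlib

section
/- Let (g₁, g₂) be a normal pair. Then Spol(g₁, g₂) ≠ 0 and S(Spol(g₁, g₂)) = max(S(u₁ g₁), S(u₂ g₂)); moreover, if S(u₁ g₁) > S(u₂ g₂) then LT(u₁) ≠ 1, and in all cases S(Spol(g₁, g₂)) > max(S(g₁), S(g₂)). -/
open MvPolynomial

namespace F5

noncomputable section
open scoped Classical

/-- Monomials (power products) in `n` variables, represented by exponent vectors. -/
abbrev Mon (n : ℕ) : Type := Fin n →₀ ℕ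

/-- Module terms `t·eₗ` of the free module `Pᵐ`. -/
abbrev MTerm (n m : ℕ) : Type := (Fin n →₀ ℕ) × Fin m

/-- Action of a monomial on a module term: `u • (t eₗ) = (u t) eₗ`. -/
def mact {n m : ℕ} (u : Mon n) (σ : MTerm n m) : MTerm n m := (u + σ.1, σ.2)

/-- An admissible order on monomials: a linear order with `1 ≤ t` and
compatibility with multiplication. -/
structure AdmissibleOrder (n : ℕ) where
  ord : LinearOrder (Mon n)
  one_le : ∀ t : Mon n, ord.le 0 t
  mul_lt_mul : ∀ s t u : Mon n, ord.lt s t → ord.lt (u + s) (u + t)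

/-- An admissible module order on module terms: a linear well-order compatible
with the monomial action, and such that `σ ≤ u σ`. -/
structure ModuleOrder (n m : ℕ) where
  ord : LinearOrder (MTerm n m)
  wf : WellFounded ord.lt
  mul_lt_mul : ∀ (σ τ : MTerm n m) (u : Mon n), ord.lt σ τ → ord.lt (mact u σ) (mact u τ)
  le_mul : ∀ (σ : MTerm n m) (u : Mon n), ord.le σ (mact u σ)

variable {k : Type*} [Field k] {n m : ℕ}

/-- The leading monomial of a polynomial with respect to `μ` (junk value `0` for `f = 0`). -/
noncomputable def pLT (μ : AdmissibleOrder n) (f : MvPolynomial (Fin n) k) : Mon n :=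
  if h : f.support.Nonempty then @Finset.max' _ μ.ord f.support h else 0

/-- The leading coefficient of a polynomial with respect to `μ`. -/
noncomputable def pLC (μ : AdmissibleOrder n) (f : MvPolynomial (Fin n) k) : k :=
  f.coeff (pLT μ f)

/-- The set (finset) of module terms occurring in an element of `Pᵐ`. -/
noncomputable def msupport (u : Fin m → MvPolynomial (Fin n) k) : Finset (MTerm n m) :=
  letI := Classical.decEq (MTerm n m)
  Finset.univ.biUnion fun l => (u l).support.image fun t => (t, l)

/-- A junk default module term (needs `m ≠ 0`). -/
def mdefault [NeZero m] : MTerm n m := (0, ⟨0, Nat.pos_of_ne_zero (NeZero.ne m)⟩)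

/-- The leading module term of a nonzero element of `Pᵐ` with respect to `μ'`
(junk value for `0`). -/
noncomputable def mLT [NeZero m] (μ' : ModuleOrder n m) (u : Fin m → MvPolynomial (Fin n) k) :
    MTerm n m :=
  if h : (msupport u).Nonempty then @Finset.max' _ μ'.ord _ h else mdefault

/-- The map `v : Pᵐ → P`, `v(eᵢ) = fᵢ`. -/
noncomputable def vmap (F : Fin m → MvPolynomial (Fin n) k)
    (u : Fin m → MvPolynomial (Fin n) k) : MvPolynomial (Fin n) k :=
  ∑ i, u i * F i

/-- The ideal `I = (f₁, …, fₘ)`. -/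
noncomputable def idealI (F : Fin m → MvPolynomial (Fin n) k) : Ideal (MvPolynomial (Fin n) k) :=
  Ideal.span (Set.range F)

/-- `LT(Syz F)`: leading module terms of nonzero syzygies of `F`. -/
def LTSyz [NeZero m] (μ' : ModuleOrder n m) (F : Fin m → MvPolynomial (Fin n) k) :
    Set (MTerm n m) :=
  {σ | ∃ s : Fin m → MvPolynomial (Fin n) k, s ≠ 0 ∧ vmap F s = 0 ∧ mLT μ' s = σ}

/-- The signature `S(f)`: the `μ'`-minimum of `{LT(u) : v(u) = f}` (junk for `f = 0` or
`f ∉ I`). -/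
noncomputable def sig [NeZero m] (μ' : ModuleOrder n m) (F : Fin m → MvPolynomial (Fin n) k)
    (f : MvPolynomial (Fin n) k) : MTerm n m :=
  if hne : {σ : MTerm n m |
      ∃ u : Fin m → MvPolynomial (Fin n) k, u ≠ 0 ∧ vmap F u = f ∧ mLT μ' u = σ}.Nonempty
  then μ'.wf.min _ hne else mdefault

/-- `f` S-reduces to `g` with `h`, with respect to `σ`. -/
noncomputable def SReduces [NeZero m] (μ : AdmissibleOrder n) (μ' : ModuleOrder n m)
    (F : Fin m → MvPolynomial (Fin n) k)
    (f h g : MvPolynomial (Fin n) k) (σ : MTerm n m) : Prop :=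
  ∃ (t : Mon n) (α : k), α ≠ 0 ∧ g = f - (monomial t α) * h ∧
    (g = 0 ∨ μ.ord.lt (pLT μ g) (pLT μ f)) ∧
    μ'.ord.lt (sig μ' F ((monomial t (1 : k)) * h)) σ

/-- `f` is S-irreducible with respect to `σ`. -/
noncomputable def SIrr [NeZero m] (μ : AdmissibleOrder n) (μ' : ModuleOrder n m)
    (F : Fin m → MvPolynomial (Fin n) k) (f : MvPolynomial (Fin n) k) (σ : MTerm n m) : Prop :=
  f = 0 ∨ ¬ ∃ h : MvPolynomial (Fin n) k, h ∈ idealI F ∧ h ≠ 0 ∧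
    ∃ g : MvPolynomial (Fin n) k, SReduces μ μ' F f h g σ

/-- `G` is an S-Gröbner basis (of `I` w.r.t. `μ`, `F`, `μ'`). -/
noncomputable def IsSGB [NeZero m] (μ : AdmissibleOrder n) (μ' : ModuleOrder n m)
    (F : Fin m → MvPolynomial (Fin n) k) (G : Set (MvPolynomial (Fin n) k)) : Prop :=
  (∀ g ∈ G, g ∈ idealI F ∧ g ≠ 0) ∧
  ∀ f : MvPolynomial (Fin n) k, f ∈ idealI F → f ≠ 0 → SIrr μ μ' F f (sig μ' F f) →
    ∃ g ∈ G, ∃ t : Mon n,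
      pLT μ ((monomial t (1 : k)) * g) = pLT μ f ∧
      sig μ' F ((monomial t (1 : k)) * g) = sig μ' F f

/-- `LT(I)`: the set of leading monomials of nonzero elements of `I`. -/
def LTIdeal (μ : AdmissibleOrder n) (F : Fin m → MvPolynomial (Fin n) k) : Set (Mon n) :=
  {t | ∃ f : MvPolynomial (Fin n) k, f ∈ idealI F ∧ f ≠ 0 ∧ pLT μ f = t}

/-- `φ(t)`: the `μ'`-minimum signature of nonzero elements of `I` with leading monomial `t`. -/
noncomputable def phi [NeZero m] (μ : AdmissibleOrder n) (μ' : ModuleOrder n m)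
    (F : Fin m → MvPolynomial (Fin n) k) (t : Mon n) : MTerm n m :=
  if hne : {σ : MTerm n m | ∃ f : MvPolynomial (Fin n) k,
      f ∈ idealI F ∧ f ≠ 0 ∧ pLT μ f = t ∧ sig μ' F f = σ}.Nonempty
  then μ'.wf.min _ hne else mdefault

/-- `f` is a primitive S-irreducible polynomial. -/
noncomputable def PrimSIrr [NeZero m] (μ : AdmissibleOrder n) (μ' : ModuleOrder n m)
    (F : Fin m → MvPolynomial (Fin n) k) (f : MvPolynomial (Fin n) k) : Prop :=
  f ∈ idealI F ∧ f ≠ 0 ∧ SIrr μ μ' F f (sig μ' F f) ∧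
  ¬ ∃ (f' : MvPolynomial (Fin n) k) (t : Mon n),
      f' ∈ idealI F ∧ f' ≠ 0 ∧ t ≠ 0 ∧ SIrr μ μ' F f' (sig μ' F f') ∧
      pLT μ ((monomial t (1 : k)) * f') = pLT μ f ∧
      sig μ' F ((monomial t (1 : k)) * f') = sig μ' F f

/-- The lcm of two monomials (pointwise maximum of exponents). -/
def lcmMon {n : ℕ} (s t : Mon n) : Mon n := t + (s - t)

/-- The term `u₁ = lcm(LT g₁, LT g₂)/(LC g₁ · LT g₁)` (when the first argument is `g₁`). -/
noncomputable def uterm (μ : AdmissibleOrder n) (g₁ g₂ : MvPolynomial (Fin n) k) :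
    MvPolynomial (Fin n) k :=
  monomial (lcmMon (pLT μ g₁) (pLT μ g₂) - pLT μ g₁) (pLC μ g₁)⁻¹

/-- The S-polynomial of `g₁` and `g₂`. -/
noncomputable def Spol (μ : AdmissibleOrder n) (g₁ g₂ : MvPolynomial (Fin n) k) :
    MvPolynomial (Fin n) k :=
  uterm μ g₁ g₂ * g₁ - uterm μ g₂ g₁ * g₂

/-- `(g₁, g₂)` is a normal pair. -/
noncomputable def NormalPair [NeZero m] (μ : AdmissibleOrder n) (μ' : ModuleOrder n m)
    (F : Fin m → MvPolynomial (Fin n) k) (g₁ g₂ : MvPolynomial (Fin n) k) : Prop :=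
  PrimSIrr μ μ' F g₁ ∧ PrimSIrr μ μ' F g₂ ∧
  sig μ' F (uterm μ g₁ g₂ * g₁) =
    mact (lcmMon (pLT μ g₁) (pLT μ g₂) - pLT μ g₁) (sig μ' F g₁) ∧
  sig μ' F (uterm μ g₂ g₁ * g₂) =
    mact (lcmMon (pLT μ g₂) (pLT μ g₁) - pLT μ g₂) (sig μ' F g₂) ∧
  sig μ' F (uterm μ g₁ g₂ * g₁) ≠ sig μ' F (uterm μ g₂ g₁ * g₂)


end
end F5

open F5 MvPolynomial

/-!
The S-polynomial is a difference `u₁g₁ - u₂g₂` of two elements of distinct signatures, so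
its signature is the larger one, `S(u₁g₁)` say. If moreover `LT(u₁) = 1`, then `LT(g₂)`
divides `LT(g₁)`, and cancelling the leading term of `g₁` by the multiple `t·g₂` with
`LT(t g₂) = LT(g₁)` is an S-reduction, because `S(t g₂) = S(u₂g₂) < S(u₁g₁) = S(g₁)`; this
contradicts the S-irreducibility of `g₁`. Hence `LT(u₁) ≠ 1`, so that `S(u₁g₁) = LT(u₁)·S(g₁)`
is strictly larger than `S(g₁)`, and also larger than `S(g₂) ≤ S(u₂g₂)`.
-/

namespace LinearOrder

variable {β : Type*} (r : LinearOrder β) {a b c : β}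

lemma lt_irrefl (a : β) : ¬r.lt a a := letI := r; _root_.lt_irrefl a
lemma le_of_lt (h : r.lt a b) : r.le a b := letI := r; h.le
lemma lt_of_le_of_lt (h₁ : r.le a b) (h₂ : r.lt b c) : r.lt a c := letI := r; h₁.trans_lt h₂
lemma lt_of_le_of_ne (h₁ : r.le a b) (h₂ : a ≠ b) : r.lt a b := letI := r; h₁.lt_of_ne h₂
lemma not_lt : ¬r.lt a b ↔ r.le b a := letI := r; _root_.not_lt
lemma lt_or_gt_of_ne (h : a ≠ b) : r.lt a b ∨ r.lt b a := letI := r; h.lt_or_gt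
lemma le_max_left (a b : β) : r.le a (r.max a b) := letI := r; _root_.le_max_left a b
lemma le_max_right (a b : β) : r.le b (r.max a b) := letI := r; _root_.le_max_right a b
lemma max_eq_left (h : r.le b a) : r.max a b = a := letI := r; _root_.max_eq_left h
lemma max_eq_right (h : r.le a b) : r.max a b = b := letI := r; _root_.max_eq_right h
lemma max_comm (a b : β) : r.max a b = r.max b a := letI := r; _root_.max_comm a b
lemma max_lt (h₁ : r.lt a c) (h₂ : r.lt b c) : r.lt (r.max a b) c := letI := r; _root_.max_lt h₁ h₂

end LinearOrder

namespace F5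

variable {k : Type*} [Field k] {n m : ℕ}

lemma lcmMon_comm (s t : Mon n) : lcmMon s t = lcmMon t s := by
  ext x
  simp only [lcmMon, Finsupp.add_apply, Finsupp.tsub_apply]
  omega

lemma lcmMon_sub_add (s t : Mon n) : lcmMon s t - s + s = lcmMon s t := by
  ext x
  simp only [lcmMon, Finsupp.add_apply, Finsupp.tsub_apply]
  omega

lemma mact_zero (σ : MTerm n m) : mact 0 σ = σ := by
  simp [mact]

lemma AdmissibleOrder.add_le_add_left (μ : AdmissibleOrder n) {s t : Mon n}
    (h : μ.ord.le s t) (u : Mon n) : μ.ord.le (u + s) (u + t) := by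
  rcases eq_or_ne s t with rfl | hne
  · exact μ.ord.le_refl _
  · exact μ.ord.le_of_lt (μ.mul_lt_mul s t u (μ.ord.lt_of_le_of_ne h hne))

lemma ModuleOrder.lt_mact (μ' : ModuleOrder n m) {t : Mon n} (ht : t ≠ 0) (σ : MTerm n m) :
    μ'.ord.lt σ (mact t σ) := by
  refine μ'.ord.lt_of_le_of_ne (μ'.le_mul σ t) fun h => ht ?_
  simpa [mact] using congrArg Prod.fst h

section LeadingTerm

variable (μ : AdmissibleOrder n)

lemma pLT_mem_support {f : MvPolynomial (Fin n) k} (hf : f ≠ 0) : pLT μ f ∈ f.support := by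
  rw [pLT, dif_pos (support_nonempty.2 hf)]
  exact @Finset.max'_mem _ μ.ord _ _

lemma le_pLT {f : MvPolynomial (Fin n) k} {s : Mon n} (hs : s ∈ f.support) :
    μ.ord.le s (pLT μ f) := by
  rw [pLT, dif_pos ⟨s, hs⟩]
  exact @Finset.le_max' _ μ.ord _ _ hs

lemma pLC_ne_zero {f : MvPolynomial (Fin n) k} (hf : f ≠ 0) : pLC μ f ≠ 0 :=
  mem_support_iff.1 (pLT_mem_support μ hf)

lemma le_add_pLT_of_mem_support_monomial_mul {t s : Mon n} {c : k}
    {f : MvPolynomial (Fin n) k} (hs : s ∈ (monomial t c * f).support) :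
    μ.ord.le s (t + pLT μ f) := by
  classical
  obtain ⟨t', ht', s', hs', rfl⟩ := Finset.mem_add.1 (support_mul _ _ hs)
  rw [Finset.mem_singleton.1 (support_monomial_subset ht')]
  exact μ.add_le_add_left (le_pLT μ hs') t

lemma sub_monomial_mul_eq_zero_or_pLT_lt {a b : MvPolynomial (Fin n) k} (hb : b ≠ 0)
    {t : Mon n} (ht : t + pLT μ b = pLT μ a) :
    a - monomial t (pLC μ a / pLC μ b) * b = 0 ∨
      μ.ord.lt (pLT μ (a - monomial t (pLC μ a / pLC μ b) * b)) (pLT μ a) := by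
  set g := a - monomial t (pLC μ a / pLC μ b) * b
  refine or_iff_not_imp_left.2 fun hg => ?_
  have hcancel : g.coeff (pLT μ a) = 0 := by
    rw [coeff_sub, ← ht, coeff_monomial_mul, ht]
    exact sub_eq_zero.2 (div_mul_cancel₀ _ (pLC_ne_zero μ hb)).symm
  have hmem := pLT_mem_support μ hg
  refine μ.ord.lt_of_le_of_ne ?_ fun h => (mem_support_iff.1 hmem) (h ▸ hcancel)
  rcases Finset.mem_union.1 (support_sub _ _ _ hmem) with h | h
  · exact le_pLT μ h
  · exact ht ▸ le_add_pLT_of_mem_support_monomial_mul μ h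

end LeadingTerm

section ModuleLeadingTerm

variable (μ' : ModuleOrder n m)

lemma mem_msupport {u : Fin m → MvPolynomial (Fin n) k} {σ : MTerm n m} :
    σ ∈ msupport u ↔ σ.1 ∈ (u σ.2).support := by
  obtain ⟨t, l⟩ := σ
  simp [msupport]

lemma msupport_nonempty {u : Fin m → MvPolynomial (Fin n) k} (hu : u ≠ 0) :
    (msupport u).Nonempty := by
  obtain ⟨l, hl⟩ := Function.ne_iff.1 hu
  obtain ⟨t, ht⟩ := support_nonempty.2 hl
  exact ⟨(t, l), mem_msupport.2 ht⟩

lemma mLT_mem [NeZero m] {u : Fin m → MvPolynomial (Fin n) k} (hu : u ≠ 0) :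
    mLT μ' u ∈ msupport u := by
  rw [mLT, dif_pos (msupport_nonempty hu)]
  exact @Finset.max'_mem _ μ'.ord _ _

lemma le_mLT [NeZero m] {u : Fin m → MvPolynomial (Fin n) k} {σ : MTerm n m}
    (hσ : σ ∈ msupport u) : μ'.ord.le σ (mLT μ' u) := by
  rw [mLT, dif_pos ⟨σ, hσ⟩]
  exact @Finset.le_max' _ μ'.ord _ _ hσ

lemma msupport_smul {c : k} (hc : c ≠ 0) (u : Fin m → MvPolynomial (Fin n) k) :
    msupport (c • u) = msupport u := by
  ext σ
  simp only [mem_msupport, Pi.smul_apply, support_smul_eq hc]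

lemma mLT_smul [NeZero m] {c : k} (hc : c ≠ 0) (u : Fin m → MvPolynomial (Fin n) k) :
    mLT μ' (c • u) = mLT μ' u := by
  simp only [mLT, msupport_smul hc]

lemma mLT_sub_le [NeZero m] {u w : Fin m → MvPolynomial (Fin n) k} (huw : u - w ≠ 0) :
    μ'.ord.le (mLT μ' (u - w)) (μ'.ord.max (mLT μ' u) (mLT μ' w)) := by
  have hmem := mem_msupport.1 (mLT_mem μ' huw)
  rcases Finset.mem_union.1 (support_sub _ _ _ hmem) with h | h
  · exact μ'.ord.le_trans _ _ _ (le_mLT μ' (mem_msupport.2 h)) (μ'.ord.le_max_left _ _)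
  · exact μ'.ord.le_trans _ _ _ (le_mLT μ' (mem_msupport.2 h)) (μ'.ord.le_max_right _ _)

end ModuleLeadingTerm

section Signature

variable (F : Fin m → MvPolynomial (Fin n) k)

lemma vmap_sub (u w : Fin m → MvPolynomial (Fin n) k) :
    vmap F (u - w) = vmap F u - vmap F w := by
  simp [vmap, sub_mul, Finset.sum_sub_distrib]

lemma vmap_smul (c : k) (u : Fin m → MvPolynomial (Fin n) k) :
    vmap F (c • u) = c • vmap F u := by
  simp [vmap, Finset.smul_sum]

variable [NeZero m] (μ' : ModuleOrder n m)

def sigSet (f : MvPolynomial (Fin n) k) : Set (MTerm n m) :=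
  {σ | ∃ u : Fin m → MvPolynomial (Fin n) k, u ≠ 0 ∧ vmap F u = f ∧ mLT μ' u = σ}

open scoped Classical in
lemma sig_eq_dite (f : MvPolynomial (Fin n) k) :
    sig μ' F f = if h : (sigSet F μ' f).Nonempty then μ'.wf.min _ h else mdefault :=
  rfl

lemma sig_le_mLT {f : MvPolynomial (Fin n) k} {u : Fin m → MvPolynomial (Fin n) k}
    (hu : u ≠ 0) (hv : vmap F u = f) : μ'.ord.le (sig μ' F f) (mLT μ' u) := by
  have hσ : mLT μ' u ∈ sigSet F μ' f := ⟨u, hu, hv, rfl⟩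
  rw [sig_eq_dite, dif_pos ⟨_, hσ⟩]
  exact μ'.ord.not_lt.1 (μ'.wf.not_lt_min _ hσ)

lemma exists_mLT_eq_sig {f : MvPolynomial (Fin n) k} (hf : f ∈ idealI F) (hf0 : f ≠ 0) :
    ∃ u : Fin m → MvPolynomial (Fin n) k, u ≠ 0 ∧ vmap F u = f ∧ mLT μ' u = sig μ' F f := by
  obtain ⟨c, hc⟩ := (Submodule.mem_span_range_iff_exists_fun _).1 hf
  have hne : (sigSet F μ' f).Nonempty := by
    refine ⟨mLT μ' c, c, ?_, by simpa [vmap] using hc, rfl⟩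
    rintro rfl
    exact hf0 (by simpa using hc.symm)
  rw [sig_eq_dite, dif_pos hne]
  exact μ'.wf.min_mem _ hne

lemma sigSet_smul {c : k} (hc : c ≠ 0) (f : MvPolynomial (Fin n) k) :
    sigSet F μ' (c • f) = sigSet F μ' f := by
  ext σ
  constructor
  · rintro ⟨u, hu, hv, rfl⟩
    refine ⟨c⁻¹ • u, smul_ne_zero (inv_ne_zero hc) hu, ?_, mLT_smul μ' (inv_ne_zero hc) u⟩
    rw [vmap_smul, hv, inv_smul_smul₀ hc]
  · rintro ⟨u, hu, hv, rfl⟩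
    exact ⟨c • u, smul_ne_zero hc hu, by rw [vmap_smul, hv], mLT_smul μ' hc u⟩

lemma sig_smul {c : k} (hc : c ≠ 0) (f : MvPolynomial (Fin n) k) :
    sig μ' F (c • f) = sig μ' F f := by
  rw [sig_eq_dite, sig_eq_dite, sigSet_smul F μ' hc]

lemma sig_neg (f : MvPolynomial (Fin n) k) : sig μ' F (-f) = sig μ' F f := by
  rw [← neg_one_smul k f, sig_smul F μ' (neg_ne_zero.2 one_ne_zero)]

lemma sig_monomial_mul {t : Mon n} {c : k} (hc : c ≠ 0) (f : MvPolynomial (Fin n) k) :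
    sig μ' F (monomial t c * f) = sig μ' F (monomial t 1 * f) := by
  have h : monomial t c * f = c • (monomial t 1 * f) := by
    rw [smul_eq_C_mul, ← mul_assoc, C_mul_monomial, mul_one]
  rw [h, sig_smul F μ' hc]

lemma sig_sub_le {f g : MvPolynomial (Fin n) k} (hf : f ∈ idealI F) (hf0 : f ≠ 0)
    (hg : g ∈ idealI F) (hg0 : g ≠ 0) (hfg : f - g ≠ 0) :
    μ'.ord.le (sig μ' F (f - g)) (μ'.ord.max (sig μ' F f) (sig μ' F g)) := by
  obtain ⟨u, hu, rfl, hLu⟩ := exists_mLT_eq_sig F μ' hf hf0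
  obtain ⟨w, hw, rfl, hLw⟩ := exists_mLT_eq_sig F μ' hg hg0
  have huw : u - w ≠ 0 := fun h => hfg (by rw [sub_eq_zero.1 h, sub_self])
  rw [← hLu, ← hLw]
  exact μ'.ord.le_trans _ _ _ (sig_le_mLT F μ' huw (vmap_sub F u w)) (mLT_sub_le μ' huw)

lemma sig_sub_of_lt {f g : MvPolynomial (Fin n) k} (hf : f ∈ idealI F) (hf0 : f ≠ 0)
    (hg : g ∈ idealI F) (hg0 : g ≠ 0) (hlt : μ'.ord.lt (sig μ' F g) (sig μ' F f)) :
    f - g ≠ 0 ∧ sig μ' F (f - g) = sig μ' F f := by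
  have hfg : f - g ≠ 0 := fun h => μ'.ord.lt_irrefl _ (by rwa [sub_eq_zero.1 h] at hlt)
  refine ⟨hfg, μ'.ord.le_antisymm _ _ ?_ ?_⟩
  · simpa [μ'.ord.max_eq_left (μ'.ord.le_of_lt hlt)] using sig_sub_le F μ' hf hf0 hg hg0 hfg
  · have h := sig_sub_le F μ' (sub_mem hf hg) hfg (neg_mem hg) (neg_ne_zero.2 hg0)
      (by rwa [sub_neg_eq_add, sub_add_cancel])
    rw [sub_neg_eq_add, sub_add_cancel, sig_neg] at h
    refine μ'.ord.not_lt.1 fun hlt' => μ'.ord.lt_irrefl (sig μ' F f) ?_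
    exact μ'.ord.lt_of_le_of_lt h (μ'.ord.max_lt hlt' hlt)

end Signature

section SPolynomial

variable [NeZero m] (μ : AdmissibleOrder n) (μ' : ModuleOrder n m)
  (F : Fin m → MvPolynomial (Fin n) k)

lemma Spol_swap (a b : MvPolynomial (Fin n) k) : Spol μ b a = -Spol μ a b :=
  (neg_sub _ _).symm

lemma lcmMon_sub_ne_zero_of_SIrr {a b : MvPolynomial (Fin n) k}
    (ha : SIrr μ μ' F a (sig μ' F a)) (ha0 : a ≠ 0) (hb : b ∈ idealI F) (hb0 : b ≠ 0)
    (hsa : sig μ' F (uterm μ a b * a) =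
      mact (lcmMon (pLT μ a) (pLT μ b) - pLT μ a) (sig μ' F a))
    (hlt : μ'.ord.lt (sig μ' F (uterm μ b a * b)) (sig μ' F (uterm μ a b * a))) :
    lcmMon (pLT μ a) (pLT μ b) - pLT μ a ≠ 0 := by
  intro h0
  have hlcm : lcmMon (pLT μ a) (pLT μ b) = pLT μ a := by
    rw [← lcmMon_sub_add, h0, zero_add]
  have ht : lcmMon (pLT μ b) (pLT μ a) - pLT μ b + pLT μ b = pLT μ a := by
    rw [lcmMon_sub_add, lcmMon_comm, hlcm]
  refine ha.resolve_left ha0 ⟨b, hb, hb0, _, _, _,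
    div_ne_zero (pLC_ne_zero μ ha0) (pLC_ne_zero μ hb0), rfl,
    sub_monomial_mul_eq_zero_or_pLT_lt μ hb0 ht, ?_⟩
  rw [← sig_monomial_mul F μ' (inv_ne_zero (pLC_ne_zero μ hb0))]
  rwa [hsa, h0, mact_zero] at hlt

lemma Spol_spec_of_sig_lt {a b : MvPolynomial (Fin n) k}
    (ha : SIrr μ μ' F a (sig μ' F a)) (haI : a ∈ idealI F) (ha0 : a ≠ 0)
    (hb : b ∈ idealI F) (hb0 : b ≠ 0)
    (hsa : sig μ' F (uterm μ a b * a) =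
      mact (lcmMon (pLT μ a) (pLT μ b) - pLT μ a) (sig μ' F a))
    (hsb : sig μ' F (uterm μ b a * b) =
      mact (lcmMon (pLT μ b) (pLT μ a) - pLT μ b) (sig μ' F b))
    (hlt : μ'.ord.lt (sig μ' F (uterm μ b a * b)) (sig μ' F (uterm μ a b * a))) :
    Spol μ a b ≠ 0 ∧ sig μ' F (Spol μ a b) = sig μ' F (uterm μ a b * a) ∧
      lcmMon (pLT μ a) (pLT μ b) - pLT μ a ≠ 0 ∧
      μ'.ord.lt (μ'.ord.max (sig μ' F a) (sig μ' F b)) (sig μ' F (Spol μ a b)) := by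
  have hu_ne {c d : MvPolynomial (Fin n) k} (hc : c ≠ 0) : uterm μ c d * c ≠ 0 :=
    mul_ne_zero (by simpa [uterm] using pLC_ne_zero μ hc) hc
  obtain ⟨hS0, hS⟩ := sig_sub_of_lt F μ' (Ideal.mul_mem_left _ _ haI) (hu_ne ha0)
    (Ideal.mul_mem_left _ _ hb) (hu_ne hb0) hlt
  have ht := lcmMon_sub_ne_zero_of_SIrr μ μ' F ha ha0 hb hb0 hsa hlt
  refine ⟨hS0, hS, ht, μ'.ord.max_lt ?_ ?_⟩
  · exact hS ▸ hsa ▸ μ'.lt_mact ht _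
  · exact hS ▸ μ'.ord.lt_of_le_of_lt (hsb ▸ μ'.le_mul _ _) hlt

end SPolynomial

end F5

/-- for a normal pair `(g₁, g₂)`: `Spol(g₁,g₂) ≠ 0`,
`S(Spol(g₁,g₂)) = max(S(u₁g₁), S(u₂g₂))`, if `S(u₁g₁) > S(u₂g₂)` then `LT(u₁) ≠ 1`,
and `S(Spol(g₁,g₂)) > max(S(g₁), S(g₂))`. -/
theorem stmt_13 {k : Type*} [Field k] {n m : ℕ} [NeZero m]
    (μ : AdmissibleOrder n) (μ' : ModuleOrder n m)
    (F : Fin m → MvPolynomial (Fin n) k)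
    (g₁ g₂ : MvPolynomial (Fin n) k)
    (hNP : NormalPair μ μ' F g₁ g₂) :
    Spol μ g₁ g₂ ≠ 0 ∧
    sig μ' F (Spol μ g₁ g₂) =
      μ'.ord.max (sig μ' F (uterm μ g₁ g₂ * g₁)) (sig μ' F (uterm μ g₂ g₁ * g₂)) ∧
    (μ'.ord.lt (sig μ' F (uterm μ g₂ g₁ * g₂)) (sig μ' F (uterm μ g₁ g₂ * g₁)) →
      lcmMon (pLT μ g₁) (pLT μ g₂) - pLT μ g₁ ≠ 0) ∧
    μ'.ord.lt (μ'.ord.max (sig μ' F g₁) (sig μ' F g₂)) (sig μ' F (Spol μ g₁ g₂)) := by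
  obtain ⟨⟨h1I, h10, h1irr, -⟩, ⟨h2I, h20, h2irr, -⟩, hs1, hs2, hne⟩ := hNP
  rcases μ'.ord.lt_or_gt_of_ne hne with hlt | hlt
  · obtain ⟨hS0, hS, -, hmax⟩ := Spol_spec_of_sig_lt μ μ' F h2irr h2I h20 h1I h10 hs2 hs1 hlt
    rw [Spol_swap, neg_ne_zero] at hS0
    rw [Spol_swap, sig_neg, μ'.ord.max_comm] at hmax
    rw [Spol_swap, sig_neg] at hS
    refine ⟨hS0, hS.trans (μ'.ord.max_eq_right (μ'.ord.le_of_lt hlt)).symm, fun h => ?_, hmax⟩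
    exact absurd h (μ'.ord.not_lt.2 (μ'.ord.le_of_lt hlt))
  · obtain ⟨hS0, hS, ht, hmax⟩ := Spol_spec_of_sig_lt μ μ' F h1irr h1I h10 h2I h20 hs1 hs2 hlt
    exact ⟨hS0, hS.trans (μ'.ord.max_eq_left (μ'.ord.le_of_lt hlt)).symm, fun _ => ht, hmax⟩
end

section
/- Suppose μ' is the position-over-term order on 𝕋ⁿₘ: t eᵢ <' s eⱼ if and only if i < j, or i = j and t < s with respect to μ. Let f ∈ I be nonzero with S(f) = t eᵢ for some t ∈ 𝕋ⁿ and 1 ≤ i ≤ m. Then f belongs to the ideal (f₁,…,fᵢ) generated by f₁,…,fᵢ, and for every l with i < l ≤ m, the module term LT(f)·eₗ belongs to LT(PSyz F). -/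
open MvPolynomial

namespace F5

noncomputable section
open scoped Classical

variable {k : Type*} [Field k] {n m : ℕ}

/-- The principal syzygy `fᵢ eⱼ − fⱼ eᵢ`. -/
def psyzGen (F : Fin m → MvPolynomial (Fin n) k) (i j : Fin m) :
    Fin m → MvPolynomial (Fin n) k :=
  Pi.single j (F i) - Pi.single i (F j)

/-- The module of principal syzygies of `F`. -/
def PSyz (F : Fin m → MvPolynomial (Fin n) k) :
    Submodule (MvPolynomial (Fin n) k) (Fin m → MvPolynomial (Fin n) k) :=
  Submodule.span _ {s | ∃ i j : Fin m, i < j ∧ s = psyzGen F i j}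

/-- `LT(PSyz F)`: leading module terms of nonzero principal syzygies of `F`. -/
def LTPSyz [NeZero m] (μ' : ModuleOrder n m) (F : Fin m → MvPolynomial (Fin n) k) :
    Set (MTerm n m) :=
  {σ | ∃ s : Fin m → MvPolynomial (Fin n) k, s ∈ PSyz F ∧ s ≠ 0 ∧ mLT μ' s = σ}

end
end F5

open F5 MvPolynomial


section Aux

variable {k : Type*} [Field k] {n m : ℕ}

lemma aux_mem_msupport {u : Fin m → MvPolynomial (Fin n) k} {s : Mon n} {j : Fin m} :
    (s, j) ∈ msupport u ↔ s ∈ (u j).support := by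
  classical
  simp only [msupport, Finset.mem_biUnion, Finset.mem_univ, true_and, Finset.mem_image,
    Prod.mk.injEq]
  constructor
  · rintro ⟨l, a, ha, rfl, rfl⟩; exact ha
  · exact fun h => ⟨j, s, h, rfl, rfl⟩

lemma aux_pLT_mem_support (μ : AdmissibleOrder n) {f : MvPolynomial (Fin n) k} (hf : f ≠ 0) :
    pLT μ f ∈ f.support := by
  rw [pLT, dif_pos (support_nonempty.2 hf)]
  exact @Finset.max'_mem _ μ.ord _ _

lemma aux_le_pLT (μ : AdmissibleOrder n) {f : MvPolynomial (Fin n) k} {s : Mon n}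
    (hs : s ∈ f.support) : μ.ord.le s (pLT μ f) := by
  rw [pLT, dif_pos ⟨s, hs⟩]
  exact @Finset.le_max' _ μ.ord _ _ hs

lemma aux_ord_le_iff (μ' : ModuleOrder n m) (σ τ : MTerm n m) :
    μ'.ord.le σ τ ↔ μ'.ord.lt σ τ ∨ σ = τ :=
  @le_iff_lt_or_eq _ μ'.ord.toPartialOrder σ τ

lemma aux_mLT_eq [NeZero m] (μ' : ModuleOrder n m) (u : Fin m → MvPolynomial (Fin n) k)
    (h : (msupport u).Nonempty) : mLT μ' u = @Finset.max' _ μ'.ord _ h :=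
  dif_pos h

end Aux

/-- with the position-over-term order `μ'`, if `S(f) = t eᵢ` then
`f ∈ (f₁, …, fᵢ)` and `LT(f)·eₗ ∈ LT(PSyz F)` for every `l > i`. -/
theorem stmt_15 {k : Type*} [Field k] {n m : ℕ} [NeZero m]
    (μ : AdmissibleOrder n) (μ' : ModuleOrder n m)
    (F : Fin m → MvPolynomial (Fin n) k)
    (hpot : ∀ σ τ : MTerm n m, μ'.ord.lt σ τ ↔
      (σ.2 < τ.2 ∨ (σ.2 = τ.2 ∧ μ.ord.lt σ.1 τ.1)))
    (f : MvPolynomial (Fin n) k) (hfI : f ∈ idealI F) (hf : f ≠ 0)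
    (t : Mon n) (i : Fin m) (hsig : sig μ' F f = (t, i)) :
    f ∈ Ideal.span {p : MvPolynomial (Fin n) k | ∃ j : Fin m, j ≤ i ∧ p = F j} ∧
    ∀ l : Fin m, i < l → (pLT μ f, l) ∈ LTPSyz μ' F := by
  classical
  -- extract a representative `u` of the signature
  obtain ⟨u, hu0, hvu, hLT⟩ : ∃ u : Fin m → MvPolynomial (Fin n) k,
      u ≠ 0 ∧ vmap F u = f ∧ mLT μ' u = (t, i) := by
    have hne : ({σ : MTerm n m |
        ∃ u : Fin m → MvPolynomial (Fin n) k, u ≠ 0 ∧ vmap F u = f ∧ mLT μ' u = σ}).Nonempty := by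
      obtain ⟨c, hc⟩ := Ideal.mem_span_range_iff_exists_fun.1 hfI
      have hc0 : c ≠ 0 := by
        rintro rfl
        apply hf
        rw [← hc]
        simp
      exact ⟨mLT μ' c, c, hc0, hc, rfl⟩
    have hm := μ'.wf.min_mem _ hne
    rw [sig, dif_pos hne] at hsig
    rwa [hsig] at hm
  have humne : (msupport u).Nonempty := by
    have : ∃ j, u j ≠ 0 := by
      by_contra h
      push_neg at h
      exact hu0 (funext h)
    obtain ⟨j, hj⟩ := this
    obtain ⟨s, hs⟩ := support_nonempty.2 hj
    exact ⟨(s, j), aux_mem_msupport.2 hs⟩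
  have hmax : ∀ σ ∈ msupport u, μ'.ord.le σ (t, i) := by
    intro σ hσ
    have h1 := @Finset.le_max' _ μ'.ord _ _ hσ
    rwa [← aux_mLT_eq μ' u humne, hLT] at h1
  have hj_le : ∀ j : Fin m, u j ≠ 0 → j ≤ i := by
    intro j hj
    obtain ⟨s, hs⟩ := support_nonempty.2 hj
    have h := hmax (s, j) (aux_mem_msupport.2 hs)
    rcases (aux_ord_le_iff μ' _ _).1 h with h | h
    · rcases (hpot _ _).1 h with h | ⟨h, _⟩
      · exact le_of_lt h
      · exact le_of_eq h
    · exact le_of_eq (congrArg Prod.snd h)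
  constructor
  · -- f ∈ (f₁, …, fᵢ)
    rw [← hvu, vmap]
    refine Ideal.sum_mem _ fun j _ => ?_
    by_cases hj : u j = 0
    · simp [hj]
    · exact Ideal.mul_mem_left _ _ (Ideal.subset_span ⟨j, hj_le j hj, rfl⟩)
  · intro l hl
    have hul : u l = 0 := by
      by_contra h
      exact absurd (hj_le l h) (not_le.2 hl)
    -- the syzygy
    set s : Fin m → MvPolynomial (Fin n) k := ∑ j, u j • psyzGen F j l with hs_def
    have hs_apply : ∀ c : Fin m, s c =
        (if c = l then f else 0) - F l * u c := by
      intro c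
      have : s c = ∑ j, u j * (psyzGen F j l c) := by
        simp [hs_def, Finset.sum_apply]
      rw [this]
      simp only [psyzGen, Pi.sub_apply, Pi.single_apply, mul_sub]
      rw [Finset.sum_sub_distrib]
      congr 1
      · by_cases hcl : c = l
        · subst hcl
          simp [← hvu, vmap]
        · simp [hcl]
      · simp only [mul_ite, mul_zero]
        rw [Finset.sum_ite_eq]
        simp [mul_comm]
    have hsl : s l = f := by
      rw [hs_apply l]
      simp [hul]
    have hsc : ∀ c : Fin m, c ≠ l → s c = -(F l * u c) := by
      intro c hc
      rw [hs_apply c, if_neg hc, zero_sub]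
    have hsPSyz : s ∈ PSyz F := by
      rw [hs_def]
      refine Submodule.sum_mem _ fun j _ => ?_
      by_cases hj : u j = 0
      · simp [hj]
      · exact Submodule.smul_mem _ _
          (Submodule.subset_span ⟨j, l, lt_of_le_of_lt (hj_le j hj) hl, rfl⟩)
    have hsne : s ≠ 0 := by
      intro h
      apply hf
      rw [← hsl, h, Pi.zero_apply]
    refine ⟨s, hsPSyz, hsne, ?_⟩
    have hmem : (pLT μ f, l) ∈ msupport s := by
      refine aux_mem_msupport.2 ?_
      rw [hsl]
      exact aux_pLT_mem_support μ hf
    have hne' : (msupport s).Nonempty := ⟨_, hmem⟩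
    rw [aux_mLT_eq μ' s hne']
    have hub : ∀ σ ∈ msupport s, μ'.ord.le σ (pLT μ f, l) := by
      rintro ⟨s', c⟩ hσ
      have hc : s' ∈ (s c).support := aux_mem_msupport.1 hσ
      by_cases hcl : c = l
      · subst hcl
        rw [hsl] at hc
        have := aux_le_pLT μ hc
        rcases (@le_iff_lt_or_eq _ μ.ord.toPartialOrder _ _).1 this with h | h
        · exact (aux_ord_le_iff μ' _ _).2 (Or.inl ((hpot _ _).2 (Or.inr ⟨rfl, h⟩)))
        · exact (aux_ord_le_iff μ' _ _).2 (Or.inr (by rw [h]))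
      · have huc : u c ≠ 0 := by
          intro h
          rw [hsc c hcl, h, mul_zero, neg_zero] at hc
          simp at hc
        have : c < l := lt_of_le_of_lt (hj_le c huc) hl
        exact (aux_ord_le_iff μ' _ _).2 (Or.inl ((hpot _ _).2 (Or.inl this)))
    exact @le_antisymm _ μ'.ord.toPartialOrder _ _
      (@Finset.max'_le _ μ'.ord _ _ _ hub)
      (@Finset.le_max' _ μ'.ord _ _ hmem)
end
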